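/- arXiv:2407.00354 — 3 statements merged into one kernel-verified Lean document; each statement's English description precedes it below -/
import Mathlib

section
/- Let ρ : [0,∞) → ℝ be differentiable with ρ(0) > 0, and suppose ρ'(t) ≤ (b_M/d_m - ρ(t)(1+ρ(t))) · d_m ρ(t)/(1+ρ(t)) for all t ≥ 0, where b_M, d_m > 0. Then ρ(t) ≤ max(r_M, ρ(0)) for all t ≥ 0, where r_M > 0 satisfies r_M(1+r_M) = b_M/d_m. -/
open Set

theorem stmt_4 (b_M d_m r_M : ℝ) (hb : 0 < b_M) (hd : 0 < d_m)
    (hr : 0 < r_M) (hrM : r_M * (1 + r_M) = b_M / d_m)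
    (ρ ρ' : ℝ → ℝ)
    (hderiv : ∀ t ≥ (0:ℝ), HasDerivAt ρ (ρ' t) t)
    (hρ0 : 0 < ρ 0)
    (hineq : ∀ t ≥ (0:ℝ),
      ρ' t ≤ (b_M / d_m - ρ t * (1 + ρ t)) * (d_m * ρ t / (1 + ρ t))) :
    ∀ t ≥ (0:ℝ), ρ t ≤ max r_M (ρ 0) := by
  intro t ht
  set M := max r_M (ρ 0) with hM
  have hMr : r_M ≤ M := le_max_left _ _
  -- Key: if ρ x ≥ r_M at x ≥ 0, then ρ' x ≤ 0
  have key : ∀ x ≥ (0:ℝ), r_M ≤ ρ x → ρ' x ≤ 0 := by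
    intro x hx hρx
    have hρpos : 0 < ρ x := lt_of_lt_of_le hr hρx
    have h1 : (0:ℝ) ≤ d_m * ρ x / (1 + ρ x) := by
      apply div_nonneg (by positivity) (by linarith)
    have h2 : b_M / d_m - ρ x * (1 + ρ x) ≤ 0 := by nlinarith
    calc ρ' x ≤ (b_M / d_m - ρ x * (1 + ρ x)) * (d_m * ρ x / (1 + ρ x)) := hineq x hx
      _ ≤ 0 := mul_nonpos_of_nonpos_of_nonneg h2 h1
  have hcont : ContinuousOn ρ (Icc 0 t) := fun x hx =>
    ((hderiv x hx.1).continuousAt).continuousWithinAt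
  have hfd : ∀ x ∈ Ico (0:ℝ) t, HasDerivWithinAt ρ (ρ' x) (Ici x) x := fun x hx =>
    (hderiv x hx.1).hasDerivWithinAt
  -- For each ε > 0: ρ ≤ M + ε * x on [0, t]
  have main : ∀ ε > (0:ℝ), ρ t ≤ M + ε * t := by
    intro ε hε
    have := image_le_of_deriv_right_lt_deriv_boundary (f := ρ) (f' := ρ')
      (B := fun x => M + ε * x) (B' := fun _ => ε) (a := 0) (b := t)
      hcont hfd (by simp [hM]) (fun x => by
        simpa using (hasDerivAt_id x).const_mul ε |>.const_add M)
      (fun x hx hxB => by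
        have hρx : r_M ≤ ρ x := by
          have : M ≤ ρ x := by rw [hxB]; show M ≤ M + ε * x; nlinarith [hx.1]
          linarith
        exact lt_of_le_of_lt (key x hx.1 hρx) hε)
    exact this ⟨ht, le_refl t⟩
  -- let ε → 0
  by_contra hlt
  push_neg at hlt
  have ht1 : (0:ℝ) < t + 1 := by linarith
  have hε : (0:ℝ) < (ρ t - M) / (t + 1) := div_pos (by linarith) ht1
  have := main _ hε
  have : (ρ t - M) / (t + 1) * t < ρ t - M := by
    rw [div_mul_eq_mul_div, div_lt_iff₀ ht1]
    nlinarith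
  linarith [main _ hε]
end

section
/- Let ρ : [0,∞) → ℝ be differentiable with ρ(0) > 0, and suppose ρ'(t) ≥ (b_m/d_M - ρ(t)(1+ρ(t))) · d_M ρ(t)/(1+ρ(t)) for all t ≥ 0, where b_m, d_M > 0. Then ρ(t) ≥ min(r_m, ρ(0)) for all t ≥ 0, where r_m > 0 satisfies r_m(1+r_m) = b_m/d_M. -/
open Set

theorem stmt_5 (b_m d_M r_m : ℝ) (hb : 0 < b_m) (hd : 0 < d_M)
    (hr : 0 < r_m) (hrm : r_m * (1 + r_m) = b_m / d_M)
    (ρ ρ' : ℝ → ℝ)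
    (hderiv : ∀ t ≥ (0:ℝ), HasDerivAt ρ (ρ' t) t)
    (hρ0 : 0 < ρ 0)
    (hineq : ∀ t ≥ (0:ℝ),
      ρ' t ≥ (b_m / d_M - ρ t * (1 + ρ t)) * (d_M * ρ t / (1 + ρ t))) :
    ∀ t ≥ (0:ℝ), ρ t ≥ min r_m (ρ 0) := by
  intro t ht
  by_contra hcon
  push_neg at hcon
  set m : ℝ := min r_m (ρ 0) with hm
  have hm0 : 0 < m := lt_min hr hρ0
  -- pick a level c with ρ t ≤ c < m, c > 0
  set c : ℝ := max (ρ t) (m / 2) with hc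
  have hc0 : 0 < c := lt_of_lt_of_le (by linarith) (le_max_right _ _)
  have hcm : c < m := max_lt hcon (by linarith)
  have hcr : c < r_m := lt_of_lt_of_le hcm (min_le_left _ _)
  -- the sublevel set
  set S : Set ℝ := {u | u ∈ Icc (0:ℝ) t ∧ ρ u ≤ c} with hS
  have htS : t ∈ S := ⟨⟨ht, le_refl t⟩, le_max_left _ _⟩
  have hne : S.Nonempty := ⟨t, htS⟩
  have hbdd : BddBelow S := ⟨0, fun u hu => hu.1.1⟩
  have hcont : ∀ u ∈ Icc (0:ℝ) t, ContinuousAt ρ u := fun u hu =>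
    (hderiv u hu.1).continuousAt
  have hclosed : IsClosed S := by
    have heq : S = Icc (0:ℝ) t ∩ ρ ⁻¹' (Iic c) := by
      ext u; exact Iff.rfl
    rw [heq]
    exact ContinuousOn.preimage_isClosed_of_isClosed
      (fun u hu => (hcont u hu).continuousWithinAt) isClosed_Icc isClosed_Iic
  set s : ℝ := sInf S with hs
  have hsS : s ∈ S := hclosed.csInf_mem hne hbdd
  have hs0 : 0 ≤ s := hsS.1.1
  have hst : s ≤ t := hsS.1.2
  have hρs_le : ρ s ≤ c := hsS.2
  have hspos : 0 < s := by
    rcases eq_or_lt_of_le hs0 with h | h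
    · exfalso
      have : ρ 0 ≤ c := by rw [← h] at hρs_le; exact hρs_le
      have : m ≤ c := le_trans (min_le_right _ _) this
      linarith
    · exact h
  have hlt : ∀ u, 0 ≤ u → u < s → c < ρ u := by
    intro u hu0 hus
    by_contra h
    push_neg at h
    have huS : u ∈ S := ⟨⟨hu0, le_trans hus.le hst⟩, h⟩
    exact absurd (csInf_le hbdd huS) (not_le.mpr hus)
  -- ρ s = c by left continuity
  have hρs : ρ s = c := by
    refine le_antisymm hρs_le ?_
    have hcs : ContinuousAt ρ s := (hderiv s hs0).continuousAt
    have : Filter.Tendsto ρ (nhdsWithin s (Iio s)) (nhds (ρ s)) :=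
      hcs.continuousWithinAt.tendsto
    refine ge_of_tendsto this ?_
    filter_upwards [self_mem_nhdsWithin,
      Ioo_mem_nhdsLT (show (0:ℝ) < s from hspos)] with u hu hu2
    exact (hlt u hu2.1.le (mem_Iio.mp hu)).le
  -- derivative at s is positive
  have hderivpos : 0 < ρ' s := by
    have h1 : ρ s * (1 + ρ s) < b_m / d_M := by
      rw [hρs, ← hrm]
      nlinarith
    have h2 : 0 < d_M * ρ s / (1 + ρ s) := by
      rw [hρs]
      positivity
    have := hineq s hs0
    nlinarith
  -- but slope from the left is nonpositive
  have hderivle : ρ' s ≤ 0 := by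
    have hd' : HasDerivWithinAt ρ (ρ' s) (Iio s) s :=
      (hderiv s hs0).hasDerivWithinAt
    have htend := (hasDerivWithinAt_iff_tendsto_slope' (notMem_Iio.mpr le_rfl)).mp hd'
    have : Filter.NeBot (nhdsWithin s (Iio s)) := nhdsLT_neBot s
    refine le_of_tendsto htend ?_
    filter_upwards [self_mem_nhdsWithin,
      Ioo_mem_nhdsLT (show (0:ℝ) < s from hspos)] with u hu hu2
    have hu' : u < s := mem_Iio.mp hu
    have h1 : c < ρ u := hlt u hu2.1.le hu'
    have h2 : u - s < 0 := sub_neg.mpr hu'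
    rw [slope_def_field, hρs, div_nonpos_iff]
    left
    exact ⟨by linarith, by linarith⟩
  linarith
end

section
/- Suppose b, d : ℝ → ℝ are continuous with positive bounds, ρ̄ > 0 satisfies max_{x∈Ω} b(x)/d(x) = ρ̄(1+ρ̄), attained at a unique point x̄ ∈ Ω, and ρ : [0,∞) → (0,∞) is continuous with ρ(t) → ρ̄ as t → ∞. Then for every x ∈ Ω with x ≠ x̄, u(x,t) := u₀(x)·exp(∫₀^t (b(x)/(1+ρ(s)) − d(x)ρ(s)) ds) → 0 as t → ∞. -/
open Set Filter intervalIntegral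

theorem stmt_19 (b d : ℝ → ℝ) (hbc : Continuous b) (hdc : Continuous d)
    (b_m b_M d_m d_M : ℝ)
    (hb : ∀ x, 0 < b_m ∧ b_m ≤ b x ∧ b x ≤ b_M)
    (hd : ∀ x, 0 < d_m ∧ d_m ≤ d x ∧ d x ≤ d_M)
    (u₀ : ℝ → ℝ) (ρbar : ℝ) (hρbar : 0 < ρbar) (xbar : ℝ)
    (hxbarmem : u₀ xbar > 0)
    (hmax : ∀ x, u₀ x > 0 → b x / d x ≤ b xbar / d xbar)
    (huniq : ∀ x, u₀ x > 0 → b x / d x = b xbar / d xbar → x = xbar)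
    (hval : b xbar / d xbar = ρbar * (1 + ρbar))
    (ρ : ℝ → ℝ) (hρc : Continuous ρ) (hρpos : ∀ t ≥ (0:ℝ), 0 < ρ t)
    (hρlim : Tendsto ρ atTop (nhds ρbar)) :
    ∀ x, u₀ x > 0 → x ≠ xbar →
      Tendsto (fun t => u₀ x *
        Real.exp (∫ s in (0:ℝ)..t, b x / (1 + ρ s) - d x * ρ s))
        atTop (nhds 0) := by
  intro x hx hne
  set g : ℝ → ℝ := fun s => b x / (1 + ρ s) - d x * ρ s with hgdef
  have hdx : 0 < d x := lt_of_lt_of_le (hd x).1 (hd x).2.1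
  have hρ1 : 0 < 1 + ρbar := by linarith
  have hlt : b x / d x < ρbar * (1 + ρbar) := by
    rcases lt_or_eq_of_le (hmax x hx) with h | h
    · rwa [hval] at h
    · exact absurd (huniq x hx h) hne
  set f : ℝ := b x / (1 + ρbar) - d x * ρbar with hfdef
  have hf : f < 0 := by
    rw [div_lt_iff₀ hdx] at hlt
    have hbx : b x < d x * ρbar * (1 + ρbar) := by nlinarith
    have : b x / (1 + ρbar) < d x * ρbar := by
      rw [div_lt_iff₀ hρ1]; nlinarith
    simp only [hfdef]; linarith
  -- g tends to f
  clear_value f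
  have hgt : Tendsto g atTop (nhds f) := by
    rw [hfdef]
    have h1 : Tendsto (fun s => 1 + ρ s) atTop (nhds (1 + ρbar)) :=
      tendsto_const_nhds.add hρlim
    exact (tendsto_const_nhds.div h1 (ne_of_gt hρ1)).sub
      (tendsto_const_nhds.mul hρlim)
  have hf2 : f < f / 2 := by linarith
  have hev : ∀ᶠ s in atTop, g s ≤ f / 2 :=
    (hgt.eventually_lt_const hf2).mono fun s h => h.le
  obtain ⟨T0, hT0⟩ := eventually_atTop.1 hev
  set T : ℝ := max T0 0 with hTdef
  have hT0le : (0:ℝ) ≤ T := le_max_right _ _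
  have hTbound : ∀ s ≥ T, g s ≤ f / 2 := fun s hs =>
    hT0 s (le_trans (le_max_left _ _) hs)
  -- continuity of g on [0, ∞)
  have hgc : ContinuousOn g (Ici 0) := by
    apply ContinuousOn.sub
    · apply continuousOn_const.div (continuous_const.add hρc).continuousOn
      intro s hs
      have := hρpos s hs
      exact ne_of_gt (by show (0:ℝ) < 1 + ρ s; linarith)
    · exact continuousOn_const.mul hρc.continuousOn
  have hint : ∀ a c : ℝ, 0 ≤ a → 0 ≤ c → IntervalIntegrable g MeasureTheory.volume a c := by
    intro a c ha hc
    apply (hgc.mono ?_).intervalIntegrable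
    intro y hy
    rcases le_total a c with h | h
    · rw [uIcc_of_le h] at hy; exact le_trans ha hy.1
    · rw [uIcc_of_ge h] at hy; exact le_trans hc hy.1
  -- integral tends to -∞
  have hIbot : Tendsto (fun t => ∫ s in (0:ℝ)..t, g s) atTop atBot := by
    have hcomp : Tendsto (fun t : ℝ => (∫ s in (0:ℝ)..T, g s) + (t - T) * (f / 2))
        atTop atBot := by
      apply tendsto_atBot_add_const_left
      exact Tendsto.atTop_mul_const_of_neg (by linarith : f / 2 < 0)
        (tendsto_atTop_add_const_right _ _ tendsto_id)
    apply tendsto_atBot_mono' atTop ?_ hcomp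
    filter_upwards [eventually_ge_atTop T] with t ht
    have htpos : (0:ℝ) ≤ t := le_trans hT0le ht
    have hsplit : (∫ s in (0:ℝ)..t, g s) =
        (∫ s in (0:ℝ)..T, g s) + ∫ s in T..t, g s :=
      (integral_add_adjacent_intervals (hint 0 T le_rfl hT0le)
        (hint T t hT0le htpos)).symm
    have hbound : (∫ s in T..t, g s) ≤ ∫ s in T..t, (fun _ => f / 2) s := by
      apply integral_mono_on ht (hint T t hT0le htpos) intervalIntegrable_const
      intro s hs; exact hTbound s hs.1
    have hconst : (∫ s in T..t, (fun _ => f / 2) s) = (t - T) * (f / 2) := by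
      rw [integral_const, smul_eq_mul]
    rw [hsplit]
    rw [hconst] at hbound
    linarith
  have hexp : Tendsto (fun t => Real.exp (∫ s in (0:ℝ)..t, g s)) atTop (nhds 0) :=
    Real.tendsto_exp_atBot.comp hIbot
  simpa using tendsto_const_nhds.mul hexp
end
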